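/- The Fourier transform of a continuous, integrable, nonnegative function g : ℝ² → ℝ₊ which is not identically 0 is strictly positive definite; that is, for any n ≥ 1 and any pairwise distinct points x_1,…,x_n ∈ ℝ², the matrix (ĝ(x_i − x_j))_{1≤i,j≤n} is positive definite. -/

import Mathlib

/-!
Expanding the quadratic form, `v* (ĝ(xᵢ - xⱼ)) v = (1/4π²) ∫ |∑ⱼ vⱼ e^{i⟨xⱼ,y⟩}|² g(y) dy`. The
trigonometric polynomial `∑ⱼ vⱼ e^{i⟨xⱼ,y⟩}` is real-analytic on `ℝ²`, and it is not identically zero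
when `v ≠ 0` because characters with distinct frequencies are linearly independent. Hence it cannot
vanish on the nonempty open set `{g ≠ 0}`, so the continuous nonnegative integrand is positive
somewhere and the integral is positive.
-/

open MeasureTheory
open scoped ComplexOrder

/-- The Fourier transform of a function `g : ℝ² → ℝ`, with the convention
`ĝ(ξ) = (1/4π²) ∫ e^{−i⟨ξ,x⟩} g(x) dx`. -/
noncomputable def fourierTransform2 (g : EuclideanSpace ℝ (Fin 2) → ℝ)
    (ξ : EuclideanSpace ℝ (Fin 2)) : ℂ :=
  (1 / (4 * Real.pi ^ 2) : ℝ) *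
    ∫ x : EuclideanSpace ℝ (Fin 2),
      Complex.exp (-Complex.I * (inner ℝ ξ x : ℝ)) * (g x : ℂ)

open Complex ComplexConjugate

section PlaneWave

variable {V : Type*} [NormedAddCommGroup V] [InnerProductSpace ℝ V]

noncomputable def planeWave (w y : V) : ℂ := cexp (I * (inner ℝ w y : ℝ))

lemma norm_planeWave (w y : V) : ‖planeWave w y‖ = 1 := by
  simp [planeWave, norm_exp]

lemma planeWave_add_right (w y z : V) :
    planeWave w (y + z) = planeWave w y * planeWave w z := by
  simp only [planeWave, inner_add_right, ofReal_add, mul_add, exp_add]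

lemma cexp_neg_inner_sub (a b y : V) :
    cexp (-I * (inner ℝ (a - b) y : ℝ)) = conj (planeWave a y) * planeWave b y := by
  rw [planeWave, planeWave, ← exp_conj, ← exp_add, inner_sub_left]
  simp only [map_mul, conj_I, conj_ofReal, ofReal_sub]
  ring_nf

lemma planeWave_injective : Function.Injective (planeWave (V := V)) := by
  intro w w' h
  by_contra hne
  have hd : w - w' ≠ 0 := sub_ne_zero.mpr hne
  -- at `y = (π / ‖w - w'‖²) • (w - w')` the two waves differ by the factor `e^{iπ} = -1`
  set y := (Real.pi / ‖w - w'‖ ^ 2) • (w - w')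
  have hy : inner ℝ w y - inner ℝ w' y = Real.pi := by
    rw [← inner_sub_left, real_inner_smul_right, real_inner_self_eq_norm_sq]
    field_simp
  have hratio : planeWave w y = -planeWave w' y := by
    rw [planeWave, planeWave, show inner ℝ w y = Real.pi + inner ℝ w' y by linarith,
      ofReal_add, mul_add, exp_add, mul_comm I, exp_pi_mul_I, neg_one_mul]
  have h0 : planeWave w' y = 0 := by
    have := congrFun h y
    rw [hratio] at this
    exact CharZero.eq_neg_self_iff.mp this.symm
  simpa [h0] using norm_planeWave w' y

lemma linearIndependent_planeWave : LinearIndependent ℂ (planeWave (V := V)) := by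
  let χ : V → Multiplicative V →* ℂ := fun w =>
    { toFun := fun y => planeWave w y.toAdd
      map_one' := by simp [planeWave]
      map_mul' := fun y z => planeWave_add_right w y.toAdd z.toAdd }
  have hχ : Function.Injective χ := fun w w' h =>
    planeWave_injective (funext fun y => DFunLike.congr_fun h (Multiplicative.ofAdd y))
  exact (linearIndependent_monoidHom (Multiplicative V) ℂ).comp χ hχ

lemma continuous_planeWave (w : V) : Continuous (planeWave w) := by
  unfold planeWave
  fun_prop

lemma integrable_planeWave_mul [MeasurableSpace V] [OpensMeasurableSpace V] {μ : Measure V}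
    {g : V → ℝ} (hint : Integrable g μ) (a b : V) :
    Integrable (fun y => conj (planeWave a y) * planeWave b y * g y) μ := by
  refine (hint.ofReal (𝕜 := ℂ)).bdd_mul (c := 1) ?_ (Filter.Eventually.of_forall fun y => ?_)
  · exact ((continuous_planeWave a).star.mul (continuous_planeWave b)).aestronglyMeasurable
  · simp [norm_planeWave]

lemma analyticAt_planeWave (w y : V) : AnalyticAt ℝ (planeWave w) y := by
  have hlin : AnalyticAt ℝ (fun y : V => I * ((inner ℝ w y : ℝ) : ℂ)) y :=
    analyticAt_const.mul ((ofRealCLM.comp (innerSL ℝ w)).analyticAt y)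
  exact analyticAt_cexp.restrictScalars.comp hlin

end PlaneWave

section TrigPoly

variable {V : Type*} [NormedAddCommGroup V] [InnerProductSpace ℝ V]
  {ι : Type*} [Fintype ι]

noncomputable def trigPoly (x : ι → V) (v : ι → ℂ) : V → ℂ := ∑ j, v j • planeWave (x j)

lemma trigPoly_apply (x : ι → V) (v : ι → ℂ) (y : V) :
    trigPoly x v y = ∑ j, v j * planeWave (x j) y := by
  simp [trigPoly, Finset.sum_apply]

lemma eq_zero_of_trigPoly_eq_zero {x : ι → V} (hx : Function.Injective x) {v : ι → ℂ}
    (h : trigPoly x v = 0) : v = 0 :=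
  funext (Fintype.linearIndependent_iff.mp (linearIndependent_planeWave.comp x hx) v h)

lemma analyticOnNhd_trigPoly (x : ι → V) (v : ι → ℂ) :
    AnalyticOnNhd ℝ (trigPoly x v) Set.univ := fun y _ => by
  rw [trigPoly]
  exact Finset.analyticAt_sum _ fun j _ => analyticAt_const.smul (analyticAt_planeWave (x j) y)

lemma norm_trigPoly_le (x : ι → V) (v : ι → ℂ) (y : V) : ‖trigPoly x v y‖ ≤ ∑ j, ‖v j‖ := by
  rw [trigPoly_apply]
  refine (norm_sum_le _ _).trans_eq (Finset.sum_congr rfl fun j _ => ?_)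
  rw [norm_mul, norm_planeWave, mul_one]

lemma exists_trigPoly_ne_zero_of_isOpen {x : ι → V} (hx : Function.Injective x) {v : ι → ℂ}
    (hv : v ≠ 0) {U : Set V} (hU : IsOpen U) (hUne : U.Nonempty) :
    ∃ y ∈ U, trigPoly x v y ≠ 0 := by
  by_contra! hzero
  obtain ⟨y₀, hy₀⟩ := hUne
  have hloc : trigPoly x v =ᶠ[nhds y₀] 0 := Filter.eventually_of_mem (hU.mem_nhds hy₀) hzero
  have hglob := (analyticOnNhd_trigPoly x v).eqOn_zero_of_preconnected_of_eventuallyEq_zero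
    isPreconnected_univ (Set.mem_univ y₀) hloc
  exact hv (eq_zero_of_trigPoly_eq_zero hx (funext fun y => hglob (Set.mem_univ y)))

lemma integral_normSq_trigPoly_mul_pos [MeasurableSpace V] [BorelSpace V] (μ : Measure V)
    [μ.IsOpenPosMeasure] {g : V → ℝ} (hcont : Continuous g) (hint : Integrable g μ)
    (hnonneg : ∀ y, 0 ≤ g y) (hne : g ≠ 0) {x : ι → V} (hx : Function.Injective x)
    {v : ι → ℂ} (hv : v ≠ 0) :
    0 < ∫ y, normSq (trigPoly x v y) * g y ∂μ := by
  have hcontH : Continuous (trigPoly x v) :=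
    continuousOn_univ.mp (analyticOnNhd_trigPoly x v).continuousOn
  obtain ⟨y, hgy, hy⟩ := exists_trigPoly_ne_zero_of_isOpen hx hv
    (isOpen_compl_singleton.preimage hcont) (Function.ne_iff.mp hne)
  refine integral_pos_of_integrable_nonneg_nonzero (x := y)
    ((continuous_normSq.comp hcontH).mul hcont) ?_
    (fun y => mul_nonneg (normSq_nonneg _) (hnonneg y)) (mul_ne_zero ((normSq_pos.mpr hy).ne') hgy)
  refine hint.bdd_mul (c := (∑ j, ‖v j‖) ^ 2) (continuous_normSq.comp hcontH).aestronglyMeasurable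
    (Filter.Eventually.of_forall fun y => ?_)
  rw [Real.norm_of_nonneg (normSq_nonneg _), normSq_eq_norm_sq]
  exact pow_le_pow_left₀ (norm_nonneg _) (norm_trigPoly_le x v y) 2

end TrigPoly

section FourierMatrix

open Matrix

local notation "E2" => EuclideanSpace ℝ (Fin 2)

lemma fourierTransform2_sub (g : E2 → ℝ) (a b : E2) :
    fourierTransform2 g (a - b) = ((1 / (4 * Real.pi ^ 2) : ℝ) : ℂ) *
      ∫ y, conj (planeWave a y) * planeWave b y * g y := by
  simp only [fourierTransform2, cexp_neg_inner_sub]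

lemma conj_fourierTransform2 (g : E2 → ℝ) (ξ : E2) :
    conj (fourierTransform2 g ξ) = fourierTransform2 g (-ξ) := by
  have h₁ := fourierTransform2_sub g ξ 0
  have h₂ := fourierTransform2_sub g 0 ξ
  rw [sub_zero] at h₁
  rw [zero_sub] at h₂
  rw [h₁, h₂, map_mul, conj_ofReal, ← integral_conj]
  simp only [map_mul, conj_conj, conj_ofReal, mul_comm (planeWave ξ _)]

lemma dotProduct_mulVec_fourierTransform2 {g : E2 → ℝ} (hint : Integrable g)
    {ι : Type*} [Fintype ι] (x : ι → E2) (v : ι → ℂ) :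
    star v ⬝ᵥ (of fun i j => fourierTransform2 g (x i - x j)) *ᵥ v =
      ((1 / (4 * Real.pi ^ 2) : ℝ) : ℂ) * ((∫ y, normSq (trigPoly x v y) * g y : ℝ) : ℂ) := by
  have hexpand : ∀ y, ((normSq (trigPoly x v y) * g y : ℝ) : ℂ) =
      ∑ i, ∑ j, conj (v i) * v j * (conj (planeWave (x i) y) * planeWave (x j) y * g y) := by
    intro y
    rw [ofReal_mul, normSq_eq_conj_mul_self, trigPoly_apply, map_sum, Finset.sum_mul,
      Finset.sum_mul]
    refine Finset.sum_congr rfl fun i _ => ?_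
    rw [Finset.mul_sum, Finset.sum_mul]
    refine Finset.sum_congr rfl fun j _ => ?_
    rw [map_mul]
    ring
  have hint' := integrable_planeWave_mul hint
  have hcast : ((∫ y, normSq (trigPoly x v y) * g y : ℝ) : ℂ) =
      ∫ y, ((normSq (trigPoly x v y) * g y : ℝ) : ℂ) := integral_ofReal.symm
  rw [hcast, funext hexpand, integral_finsetSum _
    fun i _ => integrable_finsetSum _ fun j _ => (hint' _ _).const_mul _]
  simp only [dotProduct, Matrix.mulVec, Matrix.of_apply, fourierTransform2_sub, Finset.mul_sum,
    Pi.star_apply, RCLike.star_def]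
  refine Finset.sum_congr rfl fun i _ => ?_
  rw [integral_finsetSum _ fun j _ => (hint' _ _).const_mul _, Finset.mul_sum]
  refine Finset.sum_congr rfl fun j _ => ?_
  rw [integral_const_mul]
  ring

end FourierMatrix

theorem stmt_4_general (g : EuclideanSpace ℝ (Fin 2) → ℝ)
    (hcont : Continuous g) (hint : Integrable g) (hnonneg : ∀ x, 0 ≤ g x)
    (hne : g ≠ 0) (n : ℕ) (x : Fin n → EuclideanSpace ℝ (Fin 2))
    (hinj : Function.Injective x) :
    (Matrix.of fun i j : Fin n => fourierTransform2 g (x i - x j)).PosDef := by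
  refine Matrix.posDef_iff_dotProduct_mulVec.mpr ⟨?_, fun v hv => ?_⟩
  · ext i j
    rw [Matrix.conjTranspose_apply, Matrix.of_apply, Matrix.of_apply, RCLike.star_def,
      conj_fourierTransform2, neg_sub]
  · rw [dotProduct_mulVec_fourierTransform2 hint, ← ofReal_mul, zero_lt_real]
    exact mul_pos (by positivity)
      (integral_normSq_trigPoly_mul_pos volume hcont hint hnonneg hne hinj hv)

/-- The Fourier transform of a continuous, integrable, nonnegative function on `ℝ²`
which is not identically `0` is strictly positive definite: for any pairwise distinct
points `x_1, …, x_n`, the (Hermitian) matrix `(ĝ(x_i − x_j))_{i,j}` is positive definite. -/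
theorem stmt_4 (g : EuclideanSpace ℝ (Fin 2) → ℝ)
    (hcont : Continuous g) (hint : Integrable g) (hnonneg : ∀ x, 0 ≤ g x)
    (hne : g ≠ 0) (n : ℕ) (hn : 1 ≤ n) (x : Fin n → EuclideanSpace ℝ (Fin 2))
    (hinj : Function.Injective x) :
    (Matrix.of fun i j : Fin n => fourierTransform2 g (x i - x j)).PosDef :=
  stmt_4_general g hcont hint hnonneg hne n x hinj
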